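/- arXiv:2406.17379 — 2 statements merged into one kernel-verified Lean document; each statement's English description precedes it below -/
import Mathlib

section
/- An STN is consistent (admits an assignment T : V → ℝ satisfying all edge constraints T_Y − T_X ≤ d_{XY}) if and only if its distance graph contains no directed cycle of negative total weight. -/
/-!
Summing the constraints `T (p (i+1)) - T (p i) ≤ d (p i) (p (i+1))` around a cycle telescopes to
`0 ≤` its weight, so a consistent STN has no negative cycle. Conversely, without negative cycles,
cutting a cycle out of a walk never increases its weight; by pigeonhole every walk therefore
weighs at least as much as one with fewer than `|V|` edges, so the infimum `D x` of the weights
of walks starting at `x` is finite. Prepending an edge shows `D x ≤ d x y + D y`, i.e. `T = -D`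
is consistent.
-/

open Finset

namespace STN

variable {V : Type*} (E : V → V → Prop) (d : V → V → ℝ)

def IsWalk (p : ℕ → V) (m : ℕ) : Prop := ∀ i < m, E (p i) (p (i + 1))

def walkWeight (p : ℕ → V) (m : ℕ) : ℝ := ∑ i ∈ range m, d (p i) (p (i + 1))

def HasNegCycle : Prop :=
  ∃ (m : ℕ) (p : ℕ → V), 0 < m ∧ p m = p 0 ∧ IsWalk E p m ∧ walkWeight d p m < 0

/-- The infimum of the weights of walks from `x`; junk (`0`) if they are unbounded below. -/
noncomputable def distFrom (x : V) : ℝ :=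
  sInf {w | ∃ (m : ℕ) (p : ℕ → V), p 0 = x ∧ IsWalk E p m ∧ walkWeight d p m = w}

variable {E d}

section Walks

variable {p q : ℕ → V} {m : ℕ}

theorem isWalk_add_iff {a b : ℕ} :
    IsWalk E p (a + b) ↔ IsWalk E p a ∧ IsWalk E (fun t => p (a + t)) b := by
  refine ⟨fun h => ⟨fun i hi => h i (by omega), fun i hi => h (a + i) (by omega)⟩, ?_⟩
  rintro ⟨ha, hb⟩ i hi
  rcases Nat.lt_or_ge i a with hia | hia
  · exact ha i hia
  · obtain ⟨t, rfl⟩ := Nat.exists_eq_add_of_le hia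
    exact hb t (by omega)

theorem walkWeight_add (p : ℕ → V) (a b : ℕ) :
    walkWeight d p (a + b) = walkWeight d p a + walkWeight d (fun t => p (a + t)) b :=
  sum_range_add _ _ _

theorem IsWalk.congr (h : IsWalk E p m) (hpq : ∀ t ≤ m, p t = q t) : IsWalk E q m :=
  fun i hi => hpq i hi.le ▸ hpq (i + 1) hi ▸ h i hi

theorem walkWeight_congr (hpq : ∀ t ≤ m, p t = q t) : walkWeight d p m = walkWeight d q m :=
  sum_congr rfl fun i hi => by
    rw [hpq i (mem_range.1 hi).le, hpq (i + 1) (mem_range.1 hi)]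

theorem IsWalk.cons {x : V} (hx : E x (p 0)) (h : IsWalk E p m) :
    IsWalk E (fun | 0 => x | t + 1 => p t) (m + 1) := by
  rintro (_ | i) hi
  exacts [hx, h i (by omega)]

theorem walkWeight_cons (x : V) (p : ℕ → V) (m : ℕ) :
    walkWeight d (fun | 0 => x | t + 1 => p t) (m + 1) = d x (p 0) + walkWeight d p m := by
  rw [walkWeight, sum_range_succ', add_comm]
  rfl

theorem sub_le_walkWeight {T : V → ℝ} (hT : ∀ x y, E x y → T y - T x ≤ d x y)
    (h : IsWalk E p m) : T (p m) - T (p 0) ≤ walkWeight d p m := by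
  rw [← sum_range_sub (fun i => T (p i))]
  exact sum_le_sum fun i hi => hT _ _ (h i (mem_range.1 hi))

theorem mul_le_walkWeight {b : ℝ} (hb : ∀ x y, b ≤ d x y) (p : ℕ → V) (m : ℕ) :
    m * b ≤ walkWeight d p m := by
  simpa [walkWeight] using card_nsmul_le_sum (range m) _ b fun i _ => hb (p i) (p (i + 1))

end Walks

theorem not_hasNegCycle_of_consistent {T : V → ℝ}
    (hT : ∀ x y, E x y → T y - T x ≤ d x y) : ¬HasNegCycle E d := by
  rintro ⟨m, p, -, hcyc, hp, hneg⟩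
  have := sub_le_walkWeight hT hp
  rw [hcyc, sub_self] at this
  linarith

theorem exists_repeat_of_card_le [Fintype V] (p : ℕ → V) {m : ℕ} (hm : Fintype.card V ≤ m) :
    ∃ i c, 0 < c ∧ i + c ≤ m ∧ p i = p (i + c) := by
  obtain ⟨a, b, hab, heq⟩ :=
    Fintype.exists_ne_map_eq_of_card_lt (fun t : Fin (m + 1) => p t) (by simpa using hm)
  rcases Nat.lt_or_gt_of_ne (Fin.val_ne_of_ne hab) with h | h
  · exact ⟨a, b - a, by omega, by omega, by rwa [Nat.add_sub_cancel' h.le]⟩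
  · exact ⟨b, a - b, by omega, by omega, by rw [Nat.add_sub_cancel' h.le]; exact heq.symm⟩

/-- Cutting the closed subwalk `p i, …, p (i + c)` out of a walk of length `i + c + e`. -/
theorem exists_walk_of_cut_cycle {p : ℕ → V} {i c e : ℕ} (hp : IsWalk E p (i + c + e))
    (hrep : p i = p (i + c)) :
    ∃ q : ℕ → V, IsWalk E q (i + e) ∧
      walkWeight d q (i + e) = walkWeight d p i + walkWeight d (fun t => p (i + c + t)) e := by
  set q : ℕ → V := fun t => if t ≤ i then p t else p (t + c)
  have hpre : ∀ t ≤ i, p t = q t := fun t ht => (if_pos ht).symm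
  have hsuf : (fun t => q (i + t)) = fun t => p (i + c + t) := by
    funext t
    rcases Nat.eq_zero_or_pos t with rfl | ht
    · simpa [q] using hrep
    · simp only [q, if_neg (show ¬i + t ≤ i by omega)]
      congr 1
      omega
  rw [isWalk_add_iff, isWalk_add_iff] at hp
  refine ⟨q, isWalk_add_iff.2 ⟨hp.1.1.congr hpre, hsuf ▸ ?_⟩, ?_⟩
  · simpa [Nat.add_assoc] using hp.2
  · rw [walkWeight_add, hsuf, walkWeight_congr hpre]

theorem exists_shorter_walk_le [Fintype V] (h : ¬HasNegCycle E d) {p : ℕ → V} {m : ℕ}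
    (hp : IsWalk E p m) (hm : Fintype.card V ≤ m) :
    ∃ k q, k < m ∧ IsWalk E q k ∧ walkWeight d q k ≤ walkWeight d p m := by
  obtain ⟨i, c, hc, hcm, hrep⟩ := exists_repeat_of_card_le p hm
  obtain ⟨e, rfl⟩ := Nat.exists_eq_add_of_le hcm
  have hcycle : 0 ≤ walkWeight d (fun t => p (i + t)) c := by
    by_contra hneg
    have hcw := (isWalk_add_iff.1 (isWalk_add_iff.1 hp).1).2
    exact h ⟨c, _, hc, hrep.symm, hcw, not_le.1 hneg⟩
  obtain ⟨q, hq, hqw⟩ := exists_walk_of_cut_cycle hp hrep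
  refine ⟨i + e, q, by omega, hq, ?_⟩
  rw [hqw, walkWeight_add, walkWeight_add]
  linarith

theorem exists_le_walkWeight [Fintype V] (h : ¬HasNegCycle E d) :
    ∃ B, ∀ (p : ℕ → V) (m : ℕ), IsWalk E p m → B ≤ walkWeight d p m := by
  obtain ⟨b, hb⟩ := Finite.bddBelow_range fun z : V × V => d z.1 z.2
  have hb' : ∀ x y, min b 0 ≤ d x y := fun x y => (min_le_left _ _).trans (hb ⟨(x, y), rfl⟩)
  refine ⟨Fintype.card V * min b 0, fun p m => ?_⟩
  induction m using Nat.strong_induction_on generalizing p with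
  | _ m ih =>
    intro hp
    rcases Nat.lt_or_ge m (Fintype.card V) with hm | hm
    · calc (Fintype.card V : ℝ) * min b 0 ≤ m * min b 0 :=
            mul_le_mul_of_nonpos_right (by exact_mod_cast hm.le) (min_le_right _ _)
        _ ≤ walkWeight d p m := mul_le_walkWeight hb' p m
    · obtain ⟨k, q, hk, hq, hqp⟩ := exists_shorter_walk_le h hp hm
      exact (ih k hk q hq).trans hqp

theorem distFrom_le_add [Fintype V] (h : ¬HasNegCycle E d) {x y : V} (hxy : E x y) :
    distFrom E d x ≤ d x y + distFrom E d y := by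
  obtain ⟨B, hB⟩ := exists_le_walkWeight h
  have hbdd :
      BddBelow {w | ∃ (m : ℕ) (p : ℕ → V), p 0 = x ∧ IsWalk E p m ∧ walkWeight d p m = w} :=
    ⟨B, by rintro _ ⟨m, p, -, hp, rfl⟩; exact hB p m hp⟩
  rw [← sub_le_iff_le_add']
  refine le_csInf ⟨0, 0, fun _ => y, rfl, fun _ h => absurd h (Nat.not_lt_zero _), rfl⟩ ?_
  rintro _ ⟨m, p, rfl, hp, rfl⟩
  rw [sub_le_iff_le_add', ← walkWeight_cons]
  exact csInf_le hbdd ⟨m + 1, _, rfl, hp.cons hxy, rfl⟩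

end STN

/-- An STN (a finite directed edge-weighted graph over node set V,
where edge (X,Y) with weight d_{XY} imposes T_Y − T_X ≤ d_{XY}) is consistent
(admits an assignment T : V → ℝ satisfying all edge constraints) if and only if
its distance graph contains no directed cycle of negative total weight. -/
theorem stmt6 {V : Type*} [Fintype V] (E : V → V → Prop) (d : V → V → ℝ) :
    (∃ T : V → ℝ, ∀ x y : V, E x y → T y - T x ≤ d x y) ↔
      ¬ ∃ (m : ℕ) (p : ℕ → V), 0 < m ∧ p m = p 0 ∧
          (∀ i < m, E (p i) (p (i + 1))) ∧
          (∑ i ∈ Finset.range m, d (p i) (p (i + 1))) < 0 := by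
  refine ⟨fun ⟨T, hT⟩ => STN.not_hasNegCycle_of_consistent hT, fun h => ?_⟩
  refine ⟨fun x => -STN.distFrom E d x, fun x y hxy => ?_⟩
  linarith [STN.distFrom_le_add h hxy]
end

section
/- For a consistent STN with all-pairs shortest-path matrix D, an assignment T satisfies all original edge constraints if and only if it satisfies T_y − T_x ≤ D(x,y) for all node pairs (x,y) with D(x,y) < ∞; i.e., the minimal (tightest) implied bound between any two time points is the shortest-path distance. -/
/-- The set of total weights (in the extended reals) of directed paths from `x`
to `y` in the edge-weighted graph `(E, d)`; the empty path, of weight 0, counts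
when `x = y`. -/
def pathWeightsE {V : Type*} (E : V → V → Prop) (d : V → V → ℝ) (x y : V) :
    Set EReal :=
  {w | ∃ (m : ℕ) (p : ℕ → V), p 0 = x ∧ p m = y ∧
        (∀ i < m, E (p i) (p (i + 1))) ∧
        w = ∑ i ∈ Finset.range m, ((d (p i) (p (i + 1)) : ℝ) : EReal)}

/-- The all-pairs shortest-path matrix: `D x y` is the shortest directed path
weight from `x` to `y`, `+∞` if no path exists. -/
noncomputable def apspDist {V : Type*} (E : V → V → Prop) (d : V → V → ℝ)
    (x y : V) : EReal :=
  sInf (pathWeightsE E d x y)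

@[norm_cast]
lemma EReal.coe_finset_sum {α : Type*} (s : Finset α) (f : α → ℝ) :
    ((∑ i ∈ s, f i : ℝ) : EReal) = ∑ i ∈ s, ((f i : ℝ) : EReal) :=
  map_sum (⟨⟨Real.toEReal, EReal.coe_zero⟩, EReal.coe_add⟩ : ℝ →+ EReal) f s

section Potential

variable {V : Type*} {E : V → V → Prop} {d : V → V → ℝ} {T : V → ℝ}

lemma coe_sub_le_of_mem_pathWeightsE (hT : ∀ x y, E x y → T y - T x ≤ d x y) {x y : V}
    {w : EReal} (hw : w ∈ pathWeightsE E d x y) : ((T y - T x : ℝ) : EReal) ≤ w := by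
  obtain ⟨m, p, rfl, rfl, hpath, rfl⟩ := hw
  rw [← EReal.coe_finset_sum, EReal.coe_le_coe_iff, ← Finset.sum_range_sub (fun i => T (p i))]
  exact Finset.sum_le_sum fun i hi => hT _ _ (hpath i (Finset.mem_range.mp hi))

lemma coe_sub_le_apspDist (hT : ∀ x y, E x y → T y - T x ≤ d x y) (x y : V) :
    ((T y - T x : ℝ) : EReal) ≤ apspDist E d x y :=
  le_sInf fun _ => coe_sub_le_of_mem_pathWeightsE hT

end Potential

lemma coe_mem_pathWeightsE {V : Type*} {E : V → V → Prop} (d : V → V → ℝ) {x y : V}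
    (hxy : E x y) : ((d x y : ℝ) : EReal) ∈ pathWeightsE E d x y := by
  refine ⟨1, fun i => if i = 0 then x else y, by simp, by simp, ?_, by simp⟩
  intro i hi
  obtain rfl : i = 0 := Nat.lt_one_iff.mp hi
  simpa using hxy

lemma apspDist_le_of_adj {V : Type*} {E : V → V → Prop} (d : V → V → ℝ) {x y : V}
    (hxy : E x y) : apspDist E d x y ≤ d x y :=
  sInf_le (coe_mem_pathWeightsE d hxy)

theorem stmt13_general {V : Type*} (E : V → V → Prop) (d : V → V → ℝ)
    (T : V → ℝ) :
    (∀ x y : V, E x y → T y - T x ≤ d x y) ↔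
      (∀ x y : V, apspDist E d x y < ⊤ →
        ((T y - T x : ℝ) : EReal) ≤ apspDist E d x y) := by
  refine ⟨fun hT x y _ => coe_sub_le_apspDist hT x y, fun h x y hxy => ?_⟩
  have hle := apspDist_le_of_adj d hxy
  exact EReal.coe_le_coe_iff.mp ((h x y (hle.trans_lt (EReal.coe_lt_top _))).trans hle)

/-- For a consistent STN (no negative directed cycle) with
all-pairs shortest-path matrix D, an assignment T satisfies all original edge
constraints T_y − T_x ≤ d_{xy} if and only if it satisfies T_y − T_x ≤ D(x,y)
for all node pairs (x,y) with D(x,y) < ∞; i.e., the minimal (tightest) implied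
bound between any two time points is the shortest-path distance. -/
theorem stmt13 {V : Type*} [Fintype V] (E : V → V → Prop) (d : V → V → ℝ)
    (hconsistent : ¬ ∃ (m : ℕ) (p : ℕ → V), 0 < m ∧ p m = p 0 ∧
        (∀ i < m, E (p i) (p (i + 1))) ∧
        (∑ i ∈ Finset.range m, d (p i) (p (i + 1))) < 0)
    (T : V → ℝ) :
    (∀ x y : V, E x y → T y - T x ≤ d x y) ↔
      (∀ x y : V, apspDist E d x y < ⊤ →
        ((T y - T x : ℝ) : EReal) ≤ apspDist E d x y) :=
  stmt13_general E d T
end
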